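/- arXiv:1002.3835 — 2 statements merged into one kernel-verified Lean document; each statement's English description precedes it below -/
import Mathlib

section
/- For all x, y ∈ U^ev, the element Σ ad_{R₂}(y) ⊗ ad_{R₁}(x) of U_ζ ⊗ U_ζ — that is, the image of the R-matrix R = Σ R₁ ⊗ R₂ under the ℂ-linear map determined by a⊗b ↦ ad_b(y) ⊗ ad_a(x) — lies in U^ev ⊗ U^ev. -/
open scoped TensorProduct

noncomputable section
namespace RestrictedQsl2

inductive Gen : Type | E | F | K | Kinv

abbrev FA : Type := FreeAlgebra ℂ Gen

/-- `t = exp(πi/ℓ)`. -/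
def tval (ℓ : ℕ) : ℂ := Complex.exp (Real.pi * Complex.I / ℓ)

/-- `s = exp(πi/(2ℓ))`, so `s² = t`. -/
def sval (ℓ : ℕ) : ℂ := Complex.exp (Real.pi * Complex.I / (2 * ℓ))

/-- Defining relations of the restricted quantum group `U_ζ(sl₂)`. -/
inductive Rel (ℓ : ℕ) : FA → FA → Prop
  | KKinv : Rel ℓ (FreeAlgebra.ι ℂ Gen.K * FreeAlgebra.ι ℂ Gen.Kinv) 1
  | KinvK : Rel ℓ (FreeAlgebra.ι ℂ Gen.Kinv * FreeAlgebra.ι ℂ Gen.K) 1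
  | KE : Rel ℓ (FreeAlgebra.ι ℂ Gen.K * FreeAlgebra.ι ℂ Gen.E)
      (tval ℓ • (FreeAlgebra.ι ℂ Gen.E * FreeAlgebra.ι ℂ Gen.K))
  | KF : Rel ℓ (FreeAlgebra.ι ℂ Gen.K * FreeAlgebra.ι ℂ Gen.F)
      ((tval ℓ)⁻¹ • (FreeAlgebra.ι ℂ Gen.F * FreeAlgebra.ι ℂ Gen.K))
  | EF : Rel ℓ
      (FreeAlgebra.ι ℂ Gen.E * FreeAlgebra.ι ℂ Gen.F -
        FreeAlgebra.ι ℂ Gen.F * FreeAlgebra.ι ℂ Gen.E)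
      ((tval ℓ - (tval ℓ)⁻¹)⁻¹ • (FreeAlgebra.ι ℂ Gen.K ^ 2 - FreeAlgebra.ι ℂ Gen.Kinv ^ 2))
  | Epow : Rel ℓ (FreeAlgebra.ι ℂ Gen.E ^ ℓ) 0
  | Fpow : Rel ℓ (FreeAlgebra.ι ℂ Gen.F ^ ℓ) 0
  | Kpow : Rel ℓ (FreeAlgebra.ι ℂ Gen.K ^ (4 * ℓ)) 1

/-- The restricted quantum group `U_ζ(sl₂)`. -/
abbrev Uq (ℓ : ℕ) : Type := RingQuot (Rel ℓ)

def gE (ℓ : ℕ) : Uq ℓ := RingQuot.mkAlgHom ℂ (Rel ℓ) (FreeAlgebra.ι ℂ Gen.E)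
def gF (ℓ : ℕ) : Uq ℓ := RingQuot.mkAlgHom ℂ (Rel ℓ) (FreeAlgebra.ι ℂ Gen.F)
def gK (ℓ : ℕ) : Uq ℓ := RingQuot.mkAlgHom ℂ (Rel ℓ) (FreeAlgebra.ι ℂ Gen.K)
def gKinv (ℓ : ℕ) : Uq ℓ := RingQuot.mkAlgHom ℂ (Rel ℓ) (FreeAlgebra.ι ℂ Gen.Kinv)

/-- The Casimir element `C = FE + (K²t + K⁻²t⁻¹)/(t-t⁻¹)²`. -/
def Cas (ℓ : ℕ) : Uq ℓ :=
  gF ℓ * gE ℓ +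
    ((tval ℓ - (tval ℓ)⁻¹) ^ 2)⁻¹ • (tval ℓ • gK ℓ ^ 2 + (tval ℓ)⁻¹ • gKinv ℓ ^ 2)

/-- Quantum integer `[n]`. -/
def qint (ℓ n : ℕ) : ℂ := (tval ℓ ^ n - (tval ℓ)⁻¹ ^ n) / (tval ℓ - (tval ℓ)⁻¹)

/-- Quantum factorial `[n]!`. -/
def qfact (ℓ n : ℕ) : ℂ := ∏ k ∈ Finset.range n, qint ℓ (k + 1)

/-- The diagonal part `D` of the universal `R`-matrix. -/
def Dmat (ℓ : ℕ) : Uq ℓ ⊗[ℂ] Uq ℓ :=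
  ((4 * ℓ : ℂ))⁻¹ • ∑ m ∈ Finset.range (4 * ℓ), ∑ n ∈ Finset.range (4 * ℓ),
    (sval ℓ ^ (-(m * n : ℤ))) • ((gK ℓ ^ m) ⊗ₜ[ℂ] (gK ℓ ^ n))

/-- The universal `R`-matrix. -/
def Rmat (ℓ : ℕ) : Uq ℓ ⊗[ℂ] Uq ℓ :=
  Dmat ℓ * ∑ n ∈ Finset.range ℓ,
    (((tval ℓ - (tval ℓ)⁻¹) ^ n / qfact ℓ n) * tval ℓ ^ (n * (n - 1) / 2)) •
      ((gE ℓ ^ n) ⊗ₜ[ℂ] (gF ℓ ^ n))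

/-- The even subalgebra `U^ev`, generated by `E`, `F`, `K²`, `K⁻²`. -/
def Uev (ℓ : ℕ) : Subalgebra ℂ (Uq ℓ) :=
  Algebra.adjoin ℂ {gE ℓ, gF ℓ, gK ℓ ^ 2, gKinv ℓ ^ 2}

/-- The image of `U^ev ⊗ U^ev` in `U_ζ ⊗ U_ζ`. -/
def UevT (ℓ : ℕ) : Submodule ℂ (Uq ℓ ⊗[ℂ] Uq ℓ) :=
  LinearMap.range
    (TensorProduct.map (Subalgebra.toSubmodule (Uev ℓ)).subtype
      (Subalgebra.toSubmodule (Uev ℓ)).subtype)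

/-- The adjoint action, as a linear map `x ⊗ r ↦ ad_r(x) = Σ r′ x S(r″)`. -/
def adMap (ℓ : ℕ) (Δ : Uq ℓ →ₐ[ℂ] Uq ℓ ⊗[ℂ] Uq ℓ) (S : Uq ℓ →ₗ[ℂ] Uq ℓ) :
    Uq ℓ ⊗[ℂ] Uq ℓ →ₗ[ℂ] Uq ℓ :=
  LinearMap.mul' ℂ (Uq ℓ) ∘ₗ
    TensorProduct.map LinearMap.id (LinearMap.mul' ℂ (Uq ℓ)) ∘ₗ
    (TensorProduct.leftComm ℂ (Uq ℓ) (Uq ℓ) (Uq ℓ)).toLinearMap ∘ₗ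
    TensorProduct.map LinearMap.id (TensorProduct.map LinearMap.id S) ∘ₗ
    TensorProduct.map LinearMap.id Δ.toLinearMap

/-- `adL y : a ↦ ad_a(y)`, linear in `a`. -/
def adL (ℓ : ℕ) (Δ : Uq ℓ →ₐ[ℂ] Uq ℓ ⊗[ℂ] Uq ℓ) (S : Uq ℓ →ₗ[ℂ] Uq ℓ) (y : Uq ℓ) :
    Uq ℓ →ₗ[ℂ] Uq ℓ :=
  adMap ℓ Δ S ∘ₗ TensorProduct.mk ℂ (Uq ℓ) (Uq ℓ) y

/-! The `R`-matrix plays no role: `U^ev` is stable under `ad_a` for every `a ∈ U_ζ`, so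
`ad_{(·)}(y) ⊗ ad_{(·)}(x)` sends every tensor into `U^ev ⊗ U^ev`. Since `a ↦ ad_a` is an
action (`ad_{ab} = ad_a ∘ ad_b`), it suffices to check the generators: `ad_E` and `ad_F` are
explicit expressions in `E`, `F`, `K^{±2}`; `ad_K` is conjugation by the unit `K`, which rescales
`E`, `F` and fixes `K^{±2}`; and `ad_{K⁻¹}(y) = K⁻² ad_K(y) K²`. -/

theorem _root_.Algebra.units_conj_mem_adjoin {R A : Type*} [CommSemiring R] [Semiring A]
    [Algebra R A] {s : Set A} (u : Aˣ) (hs : ∀ x ∈ s, ↑u * x * ↑u⁻¹ ∈ Algebra.adjoin R s) {y : A}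
    (hy : y ∈ Algebra.adjoin R s) : ↑u * y * ↑u⁻¹ ∈ Algebra.adjoin R s := by
  let conj := MulSemiringAction.toAlgHom R A (ConjAct.toConjAct u)
  have hmap : (Algebra.adjoin R s).map conj ≤ Algebra.adjoin R s := by
    rw [AlgHom.map_adjoin, Algebra.adjoin_le_iff]
    rintro _ ⟨x, hx, rfl⟩
    exact hs x hx
  exact hmap ⟨y, hy, rfl⟩

theorem _root_.TensorProduct.map_mem_range_map_subtype {R M N P Q : Type*} [CommSemiring R]
    [AddCommMonoid M] [AddCommMonoid N] [AddCommMonoid P] [AddCommMonoid Q]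
    [Module R M] [Module R N] [Module R P] [Module R Q] (p : Submodule R P) (q : Submodule R Q)
    {f : M →ₗ[R] P} {g : N →ₗ[R] Q} (hf : ∀ m, f m ∈ p) (hg : ∀ n, g n ∈ q) (z : M ⊗[R] N) :
    TensorProduct.map f g z ∈ LinearMap.range (TensorProduct.map p.subtype q.subtype) := by
  refine ⟨TensorProduct.map (f.codRestrict p hf) (g.codRestrict q hg) z, ?_⟩
  rw [← LinearMap.comp_apply, ← TensorProduct.map_comp, LinearMap.subtype_comp_codRestrict,
    LinearMap.subtype_comp_codRestrict]

variable {ℓ : ℕ}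

theorem gK_mul_gKinv : gK ℓ * gKinv ℓ = 1 := by
  simpa [gK, gKinv] using RingQuot.mkAlgHom_rel ℂ (Rel.KKinv (ℓ := ℓ))

theorem gKinv_mul_gK : gKinv ℓ * gK ℓ = 1 := by
  simpa [gK, gKinv] using RingQuot.mkAlgHom_rel ℂ (Rel.KinvK (ℓ := ℓ))

theorem gK_mul_gE : gK ℓ * gE ℓ = tval ℓ • (gE ℓ * gK ℓ) := by
  simpa [gK, gE] using RingQuot.mkAlgHom_rel ℂ (Rel.KE (ℓ := ℓ))

theorem gK_mul_gF : gK ℓ * gF ℓ = (tval ℓ)⁻¹ • (gF ℓ * gK ℓ) := by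
  simpa [gK, gF] using RingQuot.mkAlgHom_rel ℂ (Rel.KF (ℓ := ℓ))

def unitK (ℓ : ℕ) : (Uq ℓ)ˣ := ⟨gK ℓ, gKinv ℓ, gK_mul_gKinv, gKinv_mul_gK⟩

theorem gE_mem_Uev : gE ℓ ∈ Uev ℓ := Algebra.subset_adjoin (by simp)
theorem gF_mem_Uev : gF ℓ ∈ Uev ℓ := Algebra.subset_adjoin (by simp)
theorem gK_sq_mem_Uev : gK ℓ ^ 2 ∈ Uev ℓ := Algebra.subset_adjoin (by simp)
theorem gKinv_sq_mem_Uev : gKinv ℓ ^ 2 ∈ Uev ℓ := Algebra.subset_adjoin (by simp)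

theorem gK_mul_mul_gKinv_mem_Uev {y : Uq ℓ} (hy : y ∈ Uev ℓ) : gK ℓ * y * gKinv ℓ ∈ Uev ℓ := by
  refine Algebra.units_conj_mem_adjoin (unitK ℓ) ?_ hy
  have hKKinv : Commute (unitK ℓ : Uq ℓ) ↑(unitK ℓ)⁻¹ := Commute.units_inv_right (.refl _)
  rintro x (rfl | rfl | rfl | rfl)
  · change gK ℓ * gE ℓ * gKinv ℓ ∈ _
    rw [gK_mul_gE, smul_mul_assoc, mul_assoc, gK_mul_gKinv, mul_one]
    exact Subalgebra.smul_mem _ gE_mem_Uev _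
  · change gK ℓ * gF ℓ * gKinv ℓ ∈ _
    rw [gK_mul_gF, smul_mul_assoc, mul_assoc, gK_mul_gKinv, mul_one]
    exact Subalgebra.smul_mem _ gF_mem_Uev _
  · change (unitK ℓ : Uq ℓ) * (unitK ℓ : Uq ℓ) ^ 2 * ↑(unitK ℓ)⁻¹ ∈ _
    rw [(Commute.self_pow (unitK ℓ : Uq ℓ) 2).eq, Units.mul_inv_cancel_right]
    exact gK_sq_mem_Uev
  · change (unitK ℓ : Uq ℓ) * (↑(unitK ℓ)⁻¹ : Uq ℓ) ^ 2 * ↑(unitK ℓ)⁻¹ ∈ _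
    rw [(hKKinv.pow_right 2).eq, Units.mul_inv_cancel_right]
    exact gKinv_sq_mem_Uev

theorem gKinv_mul_mul_gK_mem_Uev {y : Uq ℓ} (hy : y ∈ Uev ℓ) : gKinv ℓ * y * gK ℓ ∈ Uev ℓ := by
  have h : gKinv ℓ * y * gK ℓ = gKinv ℓ ^ 2 * (gK ℓ * y * gKinv ℓ) * gK ℓ ^ 2 := by
    change ↑(unitK ℓ)⁻¹ * y * ↑(unitK ℓ) =
      ↑(unitK ℓ)⁻¹ ^ 2 * (↑(unitK ℓ) * y * ↑(unitK ℓ)⁻¹) * ↑(unitK ℓ) ^ 2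
    simp only [sq, mul_assoc, Units.inv_mul_cancel_left]
  rw [h]
  exact mul_mem (mul_mem gKinv_sq_mem_Uev (gK_mul_mul_gKinv_mem_Uev hy)) gK_sq_mem_Uev

variable {Δ : Uq ℓ →ₐ[ℂ] Uq ℓ ⊗[ℂ] Uq ℓ} {S : Uq ℓ →ₗ[ℂ] Uq ℓ}

theorem adL_apply (y a : Uq ℓ) :
    adL ℓ Δ S y a =
      LinearMap.mul' ℂ (Uq ℓ) (TensorProduct.map (LinearMap.mulRight ℂ y) S (Δ a)) := by
  change adMap ℓ Δ S (y ⊗ₜ a) = _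
  simp only [adMap, LinearMap.comp_apply, TensorProduct.map_tmul, LinearMap.id_apply,
    AlgHom.toLinearMap_apply]
  induction Δ a using TensorProduct.induction_on with
  | zero => simp only [map_zero, TensorProduct.tmul_zero]
  | tmul u v => simp [mul_assoc]
  | add u v hu hv => simp only [map_add, TensorProduct.tmul_add, hu, hv]

theorem adL_mul (hSmul : ∀ a b : Uq ℓ, S (a * b) = S b * S a) (y a b : Uq ℓ) :
    adL ℓ Δ S y (a * b) = adL ℓ Δ S (adL ℓ Δ S y b) a := by
  simp only [adL_apply, map_mul]
  induction Δ a using TensorProduct.induction_on with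
  | zero => simp only [zero_mul, map_zero]
  | add u₁ u₂ h₁ h₂ => simp only [add_mul, map_add, h₁, h₂]
  | tmul a₁ a₂ =>
    induction Δ b using TensorProduct.induction_on with
    | zero => simp
    | add v₁ v₂ h₁ h₂ => simp_all [mul_add, add_mul]
    | tmul b₁ b₂ => simp [hSmul, mul_assoc]

theorem adL_mem_Uev (hΔK : Δ (gK ℓ) = gK ℓ ⊗ₜ[ℂ] gK ℓ)
    (hΔKinv : Δ (gKinv ℓ) = gKinv ℓ ⊗ₜ[ℂ] gKinv ℓ)
    (hΔE : Δ (gE ℓ) = 1 ⊗ₜ[ℂ] gE ℓ + gE ℓ ⊗ₜ[ℂ] (gK ℓ ^ 2))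
    (hΔF : Δ (gF ℓ) = gF ℓ ⊗ₜ[ℂ] 1 + (gKinv ℓ ^ 2) ⊗ₜ[ℂ] gF ℓ)
    (hS1 : S 1 = 1) (hSmul : ∀ a b : Uq ℓ, S (a * b) = S b * S a)
    (hSK : S (gK ℓ) = gKinv ℓ) (hSKinv : S (gKinv ℓ) = gK ℓ)
    (hSE : S (gE ℓ) = -(gE ℓ * gKinv ℓ ^ 2)) (hSF : S (gF ℓ) = -(gK ℓ ^ 2 * gF ℓ))
    (a : Uq ℓ) {y : Uq ℓ} (hy : y ∈ Uev ℓ) : adL ℓ Δ S y a ∈ Uev ℓ := by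
  have hSK2 : S (gK ℓ ^ 2) = gKinv ℓ ^ 2 := by rw [sq, hSmul, hSK, ← sq]
  obtain ⟨p, rfl⟩ := RingQuot.mkAlgHom_surjective ℂ (Rel ℓ) a
  induction p using FreeAlgebra.induction generalizing y with
  | grade0 r =>
    rw [AlgHom.commutes, Algebra.algebraMap_eq_smul_one, map_smul, adL_apply, map_one,
      Algebra.TensorProduct.one_def]
    simpa [hS1] using Subalgebra.smul_mem _ hy r
  | grade1 g =>
    cases g
    · change adL ℓ Δ S y (gE ℓ) ∈ _
      simp only [adL_apply, hΔE, map_add, TensorProduct.map_tmul, LinearMap.mul'_apply,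
        LinearMap.mulRight_apply, hSE, hSK2, one_mul]
      exact add_mem (mul_mem hy (neg_mem (mul_mem gE_mem_Uev gKinv_sq_mem_Uev)))
        (mul_mem (mul_mem gE_mem_Uev hy) gKinv_sq_mem_Uev)
    · change adL ℓ Δ S y (gF ℓ) ∈ _
      simp only [adL_apply, hΔF, map_add, TensorProduct.map_tmul, LinearMap.mul'_apply,
        LinearMap.mulRight_apply, hS1, hSF, mul_one]
      exact add_mem (mul_mem gF_mem_Uev hy)
        (mul_mem (mul_mem gKinv_sq_mem_Uev hy) (neg_mem (mul_mem gK_sq_mem_Uev gF_mem_Uev)))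
    · change adL ℓ Δ S y (gK ℓ) ∈ _
      simpa [adL_apply, hΔK, hSK] using gK_mul_mul_gKinv_mem_Uev hy
    · change adL ℓ Δ S y (gKinv ℓ) ∈ _
      simpa [adL_apply, hΔKinv, hSKinv] using gKinv_mul_mul_gK_mem_Uev hy
  | mul p q hp hq =>
    rw [map_mul, adL_mul hSmul]
    exact hp (hq hy)
  | add p q hp hq =>
    rw [map_add, map_add]
    exact add_mem (hp hy) (hq hy)

theorem adR2_tmul_adR1_mem_Uev_general (ℓ : ℕ)
    (Δ : Uq ℓ →ₐ[ℂ] Uq ℓ ⊗[ℂ] Uq ℓ)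
    (hΔK : Δ (gK ℓ) = gK ℓ ⊗ₜ[ℂ] gK ℓ)
    (hΔKinv : Δ (gKinv ℓ) = gKinv ℓ ⊗ₜ[ℂ] gKinv ℓ)
    (hΔE : Δ (gE ℓ) = 1 ⊗ₜ[ℂ] gE ℓ + gE ℓ ⊗ₜ[ℂ] (gK ℓ ^ 2))
    (hΔF : Δ (gF ℓ) = gF ℓ ⊗ₜ[ℂ] 1 + (gKinv ℓ ^ 2) ⊗ₜ[ℂ] gF ℓ)
    (S : Uq ℓ →ₗ[ℂ] Uq ℓ)
    (hS1 : S 1 = 1) (hSmul : ∀ a b : Uq ℓ, S (a * b) = S b * S a)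
    (hSK : S (gK ℓ) = gKinv ℓ) (hSKinv : S (gKinv ℓ) = gK ℓ)
    (hSE : S (gE ℓ) = -(gE ℓ * gKinv ℓ ^ 2)) (hSF : S (gF ℓ) = -(gK ℓ ^ 2 * gF ℓ))
    (x y : Uq ℓ) (hx : x ∈ Uev ℓ) (hy : y ∈ Uev ℓ) :
    TensorProduct.map (adL ℓ Δ S y) (adL ℓ Δ S x)
        ((TensorProduct.comm ℂ (Uq ℓ) (Uq ℓ)) (Rmat ℓ)) ∈ UevT ℓ :=
  have hstable := adL_mem_Uev hΔK hΔKinv hΔE hΔF hS1 hSmul hSK hSKinv hSE hSF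
  TensorProduct.map_mem_range_map_subtype _ _ (hstable · hy) (hstable · hx) _

/-- For `x, y ∈ U^ev`, the element `Σ ad_{R₂}(y) ⊗ ad_{R₁}(x)` of
`U_ζ ⊗ U_ζ` lies in `U^ev ⊗ U^ev`. -/
theorem adR2_tmul_adR1_mem_Uev (ℓ : ℕ) (hℓ : 1 < ℓ)
    (Δ : Uq ℓ →ₐ[ℂ] Uq ℓ ⊗[ℂ] Uq ℓ)
    (hΔK : Δ (gK ℓ) = gK ℓ ⊗ₜ[ℂ] gK ℓ)
    (hΔKinv : Δ (gKinv ℓ) = gKinv ℓ ⊗ₜ[ℂ] gKinv ℓ)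
    (hΔE : Δ (gE ℓ) = 1 ⊗ₜ[ℂ] gE ℓ + gE ℓ ⊗ₜ[ℂ] (gK ℓ ^ 2))
    (hΔF : Δ (gF ℓ) = gF ℓ ⊗ₜ[ℂ] 1 + (gKinv ℓ ^ 2) ⊗ₜ[ℂ] gF ℓ)
    (S : Uq ℓ →ₗ[ℂ] Uq ℓ)
    (hS1 : S 1 = 1) (hSmul : ∀ a b : Uq ℓ, S (a * b) = S b * S a)
    (hSK : S (gK ℓ) = gKinv ℓ) (hSKinv : S (gKinv ℓ) = gK ℓ)
    (hSE : S (gE ℓ) = -(gE ℓ * gKinv ℓ ^ 2)) (hSF : S (gF ℓ) = -(gK ℓ ^ 2 * gF ℓ))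
    (x y : Uq ℓ) (hx : x ∈ Uev ℓ) (hy : y ∈ Uev ℓ) :
    TensorProduct.map (adL ℓ Δ S y) (adL ℓ Δ S x)
        ((TensorProduct.comm ℂ (Uq ℓ) (Uq ℓ)) (Rmat ℓ)) ∈ UevT ℓ :=
  adR2_tmul_adR1_mem_Uev_general ℓ Δ hΔK hΔKinv hΔE hΔF S hS1 hSmul hSK hSKinv hSE hSF x y hx hy

end RestrictedQsl2
end
end

section
/- For every x in the ℂ-linear span of {e₀, …, e_ℓ, w₁, …, w_{ℓ−1}} and every integer n ≥ 0, one has λ(x·ρⁿ)·τ(ρ) = n·τ(x·ρⁿ)·λ(ρ). (This is the relation λ(xρⁿ)/λ(ρ) = n·τ(xρⁿ)/τ(ρ) in cross-multiplied form; it holds for both choices of the sign σ.) -/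
noncomputable section
namespace RestrictedQsl2

/-- `a_m = (−1)^{m+1} s^{σ(1−m²)}`. -/
def am (ℓ : ℕ) (σ : ℤ) (m : ℕ) : ℂ := (-1) ^ (m + 1) * sval ℓ ^ (σ * (1 - (m : ℤ) ^ 2))

/-- `b_m = σ(−1)^{ℓ−1}(t−t⁻¹) s^{σ(1−m²)} m/[m]`. -/
def bm (ℓ : ℕ) (σ : ℤ) (m : ℕ) : ℂ :=
  (σ : ℂ) * (-1) ^ (ℓ - 1) * (tval ℓ - (tval ℓ)⁻¹) * sval ℓ ^ (σ * (1 - (m : ℤ) ^ 2)) *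
    (m : ℂ) / qint ℓ m

/-- `c_m = −ℓ·b_m/m`. -/
def cm (ℓ : ℕ) (σ : ℤ) (m : ℕ) : ℂ := -(ℓ : ℂ) * bm ℓ σ m / (m : ℂ)

/-- The ribbon element `ρ = Σ aₘ eₘ + Σ(bₘ wₘ + cₘ wₘ⁺)`, `wₘ = wₘ⁺ + wₘ⁻`. -/
def ribbon (ℓ : ℕ) (σ : ℤ) {A : Type*} [CommRing A] [Algebra ℂ A] (e wp wm : ℕ → A) : A :=
  ∑ m ∈ Finset.range (ℓ + 1), am ℓ σ m • e m +
    ∑ m ∈ Finset.Icc 1 (ℓ - 1), (bm ℓ σ m • (wp m + wm m) + cm ℓ σ m • wp m)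

/-!
On each generator the ribbon element acts by a Jordan block: `eₘ ρ = aₘ eₘ + dₘ` and
`dₘ ρ = aₘ dₘ` with `dₘ = bₘ wₘ + cₘ wₘ⁺`, while `wₘ ρ = aₘ wₘ`. Hence
`x ρⁿ = aⁿ x + n aⁿ⁻¹ d`. Since `λ` kills the `eₘ` and the `wₘ`, `τ` kills the `dₘ`, and
`λ(dₘ) = K aₘ τ(eₘ)` for a constant `K` independent of `m`, this gives
`λ(x ρⁿ) = n K τ(x ρⁿ)` on the span. Writing `ρ = Σₘ (aₘ eₘ + dₘ)`, the same computation
gives `λ(ρ) = K τ(ρ)`.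
-/

theorem mul_pow_succ_eq_of_mul_eq_smul_add {R A : Type*} [CommSemiring R] [Semiring A]
    [Algebra R A] {x d ρ : A} {a : R} (hx : x * ρ = a • x + d) (hd : d * ρ = a • d) (n : ℕ) :
    x * ρ ^ (n + 1) = a ^ (n + 1) • x + ((n + 1) * a ^ n) • d := by
  induction n with
  | zero => simpa using hx
  | succ n ih =>
    rw [pow_succ, ← mul_assoc, ih, add_mul, smul_mul_assoc, smul_mul_assoc, hx, hd]
    push_cast
    module

theorem map_mul_pow_eq_of_mul_eq_smul_add {R A : Type*} [CommSemiring R] [Semiring A]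
    [Algebra R A] (lam tau : A →ₗ[R] R) {x d ρ : A} {a K : R}
    (hx : x * ρ = a • x + d) (hd : d * ρ = a • d)
    (hlam : lam x = 0) (htau : tau d = 0) (hlamd : lam d = K * a * tau x) (n : ℕ) :
    lam (x * ρ ^ n) = n * K * tau (x * ρ ^ n) := by
  cases n with
  | zero => simp [hlam]
  | succ n =>
    simp only [mul_pow_succ_eq_of_mul_eq_smul_add hx hd, map_add, map_smul, smul_eq_mul, hlam,
      htau, hlamd]
    push_cast
    ring

theorem tval_pow_self {ℓ : ℕ} (hℓ : ℓ ≠ 0) : tval ℓ ^ ℓ = -1 := by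
  rw [tval, ← Complex.exp_nat_mul, mul_div_cancel₀ _ (Nat.cast_ne_zero.mpr hℓ)]
  exact Complex.exp_pi_mul_I

theorem qint_zero (ℓ : ℕ) : qint ℓ 0 = 0 := by simp [qint]

theorem qint_self {ℓ : ℕ} (hℓ : ℓ ≠ 0) : qint ℓ ℓ = 0 := by
  simp [qint, inv_pow, tval_pow_self hℓ]

theorem qint_eq_zero_of_notMem_Icc {ℓ m : ℕ} (hℓ : ℓ ≠ 0) (hm : m ≤ ℓ)
    (hm' : m ∉ Finset.Icc 1 (ℓ - 1)) : qint ℓ m = 0 := by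
  obtain rfl | rfl : m = 0 ∨ m = ℓ := by rw [Finset.mem_Icc] at hm'; omega
  exacts [qint_zero ℓ, qint_self hℓ]

/-- The constant `K` with `λ(dₘ) = K aₘ τ(eₘ)` for all `m`, hence `λ(ρ) = K τ(ρ)`. -/
def integralTraceRatio (ℓ : ℕ) (σ : ℤ) : ℂ :=
  -(σ : ℂ) * (-1) ^ (ℓ - 1) * (tval ℓ - (tval ℓ)⁻¹) * (tval ℓ)⁻¹ ^ 2 / (2 * qfact ℓ (ℓ - 1) ^ 2)

/-- The factor `[m]` in `λ(wₘ⁺)` cancels against `1/[m]` in `cₘ`; if `[m] = 0` both sides vanish. -/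
theorem cm_mul_eq {ℓ : ℕ} (hℓ : ℓ ≠ 0) (σ : ℤ) {m : ℕ} (hm : 1 ≤ m) :
    cm ℓ σ m * ((-1) ^ (m - 1) * (tval ℓ)⁻¹ ^ 2 * qint ℓ m ^ 3 /
      (2 * (ℓ : ℂ) * qfact ℓ (ℓ - 1) ^ 2)) =
      integralTraceRatio ℓ σ * am ℓ σ m * qint ℓ m ^ 2 := by
  by_cases hq : qint ℓ m = 0
  · simp [cm, bm, hq]
  have hsign : (-1 : ℂ) ^ (m + 1) = (-1) ^ (m - 1) := by
    rw [show m + 1 = m - 1 + 2 by omega, pow_add]; ring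
  have hmC : (m : ℂ) ≠ 0 := Nat.cast_ne_zero.mpr (by omega)
  have hℓC : (ℓ : ℂ) ≠ 0 := Nat.cast_ne_zero.mpr hℓ
  simp only [cm, bm, am, integralTraceRatio, hsign]
  field_simp

section Ribbon

variable {A : Type*} [CommRing A] {ℓ : ℕ} {e wp wm : ℕ → A}

structure CenterRelations (ℓ : ℕ) (e wp wm : ℕ → A) : Prop where
  e_mul_e : ∀ i ≤ ℓ, ∀ j ≤ ℓ, e i * e j = if i = j then e i else 0
  e_mul_wp : ∀ i ≤ ℓ, ∀ j, 1 ≤ j → j ≤ ℓ - 1 → e i * wp j = if i = j then wp j else 0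
  e_mul_wm : ∀ i ≤ ℓ, ∀ j, 1 ≤ j → j ≤ ℓ - 1 → e i * wm j = if i = j then wm j else 0
  w_mul_w : ∀ i, 1 ≤ i → i ≤ ℓ - 1 → ∀ j, 1 ≤ j → j ≤ ℓ - 1 →
    wp i * wp j = 0 ∧ wp i * wm j = 0 ∧ wm i * wp j = 0 ∧ wm i * wm j = 0

variable [Algebra ℂ A] {σ : ℤ}

/-- The nilpotent part `dₘ = bₘ wₘ + cₘ wₘ⁺` of `eₘ ρ`, set to `0` when `wₘ^±` do not exist. -/
def ribbonNilpart (ℓ : ℕ) (σ : ℤ) (wp wm : ℕ → A) (m : ℕ) : A :=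
  if m ∈ Finset.Icc 1 (ℓ - 1) then bm ℓ σ m • (wp m + wm m) + cm ℓ σ m • wp m else 0

theorem ribbon_eq_sum :
    ribbon ℓ σ e wp wm =
      ∑ m ∈ Finset.range (ℓ + 1), (am ℓ σ m • e m + ribbonNilpart ℓ σ wp wm m) := by
  unfold ribbonNilpart
  rw [ribbon, Finset.sum_add_distrib (s := Finset.range _), Finset.sum_ite_mem,
    Finset.inter_eq_right.mpr fun m hm => by
      simp only [Finset.mem_Icc, Finset.mem_range] at hm ⊢; omega]

theorem mul_ribbon_eq {y : A} {j : ℕ} (hj : j ≤ ℓ)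
    (hy : ∀ m ≤ ℓ, m ≠ j → y * e m = 0 ∧ y * ribbonNilpart ℓ σ wp wm m = 0) :
    y * ribbon ℓ σ e wp wm = y * (am ℓ σ j • e j + ribbonNilpart ℓ σ wp wm j) := by
  rw [ribbon_eq_sum, Finset.mul_sum]
  refine Finset.sum_eq_single_of_mem j (Finset.mem_range.mpr (by omega)) fun m hm hmj => ?_
  obtain ⟨hye, hyd⟩ := hy m (Finset.mem_range.mp hm |> Nat.lt_succ_iff.mp) hmj
  rw [mul_add, mul_smul_comm, hye, hyd, smul_zero, add_zero]

theorem mul_ribbonNilpart_eq_zero {y : A}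
    (hy : ∀ i, 1 ≤ i → i ≤ ℓ - 1 → y * wp i = 0 ∧ y * wm i = 0) (m : ℕ) :
    y * ribbonNilpart ℓ σ wp wm m = 0 := by
  unfold ribbonNilpart
  split_ifs with hm
  · rw [Finset.mem_Icc] at hm
    obtain ⟨hp, hm⟩ := hy m hm.1 hm.2
    simp only [mul_add, mul_smul_comm, hp, hm, smul_zero, add_zero]
  · exact mul_zero y

namespace CenterRelations

theorem e_mul_ribbonNilpart (h : CenterRelations ℓ e wp wm) {j : ℕ} (hj : j ≤ ℓ) (m : ℕ) :
    e j * ribbonNilpart ℓ σ wp wm m = if j = m then ribbonNilpart ℓ σ wp wm m else 0 := by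
  unfold ribbonNilpart
  split_ifs with hm hjm hjm
  · rw [Finset.mem_Icc] at hm
    simp only [mul_add, mul_smul_comm, h.e_mul_wp j hj m hm.1 hm.2, h.e_mul_wm j hj m hm.1 hm.2,
      if_pos hjm]
  · rw [Finset.mem_Icc] at hm
    simp only [mul_add, mul_smul_comm, h.e_mul_wp j hj m hm.1 hm.2, h.e_mul_wm j hj m hm.1 hm.2,
      if_neg hjm, add_zero, smul_zero]
  all_goals exact mul_zero _

theorem e_mul_ribbon (h : CenterRelations ℓ e wp wm) {j : ℕ} (hj : j ≤ ℓ) :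
    e j * ribbon ℓ σ e wp wm = am ℓ σ j • e j + ribbonNilpart ℓ σ wp wm j := by
  rw [mul_ribbon_eq hj fun m hm hmj => ⟨by rw [h.e_mul_e j hj m hm, if_neg (Ne.symm hmj)],
      by rw [h.e_mul_ribbonNilpart hj, if_neg (Ne.symm hmj)]⟩,
    mul_add, mul_smul_comm, h.e_mul_e j hj j hj, if_pos rfl, h.e_mul_ribbonNilpart hj, if_pos rfl]

theorem w_mul_ribbon (h : CenterRelations ℓ e wp wm) {j : ℕ} (hj₁ : 1 ≤ j) (hj₂ : j ≤ ℓ - 1) :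
    (wp j + wm j) * ribbon ℓ σ e wp wm = am ℓ σ j • (wp j + wm j) := by
  have hj : j ≤ ℓ := by omega
  have hwe : ∀ m ≤ ℓ, (wp j + wm j) * e m = if m = j then wp j + wm j else 0 := by
    intro m hm
    rw [mul_comm, mul_add, h.e_mul_wp m hm j hj₁ hj₂, h.e_mul_wm m hm j hj₁ hj₂]
    split_ifs <;> simp
  have hwd : ∀ m, (wp j + wm j) * ribbonNilpart ℓ σ wp wm m = 0 :=
    mul_ribbonNilpart_eq_zero fun i hi₁ hi₂ => by
      obtain ⟨hpp, hpm, hmp, hmm⟩ := h.w_mul_w j hj₁ hj₂ i hi₁ hi₂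
      simp only [add_mul, hpp, hpm, hmp, hmm, add_zero, and_self]
  rw [mul_ribbon_eq hj fun m hm hmj => ⟨by rw [hwe m hm, if_neg hmj], hwd m⟩, mul_add,
    mul_smul_comm, hwe j hj, if_pos rfl, hwd, add_zero]

theorem ribbonNilpart_mul_ribbon (h : CenterRelations ℓ e wp wm) {j : ℕ} (hj : j ≤ ℓ) :
    ribbonNilpart ℓ σ wp wm j * ribbon ℓ σ e wp wm = am ℓ σ j • ribbonNilpart ℓ σ wp wm j := by
  have hde : ∀ m ≤ ℓ, ribbonNilpart ℓ σ wp wm j * e m =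
      if m = j then ribbonNilpart ℓ σ wp wm j else 0 := by
    intro m hm
    rw [mul_comm, h.e_mul_ribbonNilpart hm]
  have hdd : ∀ m, ribbonNilpart ℓ σ wp wm j * ribbonNilpart ℓ σ wp wm m = 0 :=
    mul_ribbonNilpart_eq_zero fun i hi₁ hi₂ => by
      unfold ribbonNilpart
      split_ifs with hjI
      · rw [Finset.mem_Icc] at hjI
        obtain ⟨hpp, hpm, hmp, hmm⟩ := h.w_mul_w j hjI.1 hjI.2 i hi₁ hi₂
        simp only [add_mul, smul_mul_assoc, hpp, hpm, hmp, hmm, add_zero, smul_zero, and_self]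
      · simp
  rw [mul_ribbon_eq hj fun m hm hmj => ⟨by rw [hde m hm, if_neg hmj], hdd m⟩, mul_add,
    mul_smul_comm, hde j hj, if_pos rfl, hdd, add_zero]

end CenterRelations

structure IsLeftIntegral (ℓ : ℕ) (e wp wm : ℕ → A) (lam : A →ₗ[ℂ] ℂ) : Prop where
  map_e : ∀ m ≤ ℓ, lam (e m) = 0
  map_wp : ∀ m, 1 ≤ m → m ≤ ℓ - 1 →
    lam (wp m) = (-1 : ℂ) ^ (m - 1) * (tval ℓ)⁻¹ ^ 2 * qint ℓ m ^ 3 /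
      (2 * (ℓ : ℂ) * qfact ℓ (ℓ - 1) ^ 2)
  map_wm : ∀ m, 1 ≤ m → m ≤ ℓ - 1 → lam (wm m) = -lam (wp m)

structure IsQuantumTrace (ℓ : ℕ) (e wp wm : ℕ → A) (tau : A →ₗ[ℂ] ℂ) : Prop where
  map_e : ∀ m ≤ ℓ, tau (e m) = qint ℓ m ^ 2
  map_wp : ∀ m, 1 ≤ m → m ≤ ℓ - 1 → tau (wp m) = 0
  map_wm : ∀ m, 1 ≤ m → m ≤ ℓ - 1 → tau (wm m) = 0

theorem IsQuantumTrace.map_w {tau : A →ₗ[ℂ] ℂ} (htau : IsQuantumTrace ℓ e wp wm tau) {j : ℕ}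
    (hj₁ : 1 ≤ j) (hj₂ : j ≤ ℓ - 1) : tau (wp j + wm j) = 0 := by
  rw [map_add, htau.map_wp j hj₁ hj₂, htau.map_wm j hj₁ hj₂, add_zero]

theorem IsQuantumTrace.map_ribbonNilpart {tau : A →ₗ[ℂ] ℂ} (htau : IsQuantumTrace ℓ e wp wm tau)
    (j : ℕ) : tau (ribbonNilpart ℓ σ wp wm j) = 0 := by
  unfold ribbonNilpart
  split_ifs with hjI
  · rw [Finset.mem_Icc] at hjI
    simp only [map_add, map_smul, htau.map_w hjI.1 hjI.2, htau.map_wp j hjI.1 hjI.2, smul_zero,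
      add_zero]
  · exact map_zero tau

namespace IsLeftIntegral

variable {lam : A →ₗ[ℂ] ℂ}

theorem map_w (hlam : IsLeftIntegral ℓ e wp wm lam) {j : ℕ} (hj₁ : 1 ≤ j) (hj₂ : j ≤ ℓ - 1) :
    lam (wp j + wm j) = 0 := by
  rw [map_add, hlam.map_wm j hj₁ hj₂, add_neg_cancel]

theorem map_ribbonNilpart (hℓ : ℓ ≠ 0) (hlam : IsLeftIntegral ℓ e wp wm lam) {j : ℕ}
    (hj : j ≤ ℓ) :
    lam (ribbonNilpart ℓ σ wp wm j) = integralTraceRatio ℓ σ * am ℓ σ j * qint ℓ j ^ 2 := by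
  unfold ribbonNilpart
  split_ifs with hjI
  · rw [Finset.mem_Icc] at hjI
    rw [map_add, map_smul, map_smul, hlam.map_w hjI.1 hjI.2, hlam.map_wp j hjI.1 hjI.2,
      smul_zero, zero_add, smul_eq_mul, cm_mul_eq hℓ σ hjI.1]
  · rw [qint_eq_zero_of_notMem_Icc hℓ hj hjI, map_zero]
    ring

theorem map_ribbon (hℓ : ℓ ≠ 0) (hlam : IsLeftIntegral ℓ e wp wm lam) {tau : A →ₗ[ℂ] ℂ}
    (htau : IsQuantumTrace ℓ e wp wm tau) :
    lam (ribbon ℓ σ e wp wm) = integralTraceRatio ℓ σ * tau (ribbon ℓ σ e wp wm) := by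
  rw [ribbon_eq_sum, map_sum, map_sum, Finset.mul_sum]
  refine Finset.sum_congr rfl fun m hm => ?_
  have hm : m ≤ ℓ := Nat.lt_succ_iff.mp (Finset.mem_range.mp hm)
  rw [map_add, map_add, map_smul, map_smul, hlam.map_e m hm, htau.map_e m hm,
    hlam.map_ribbonNilpart hℓ hm, htau.map_ribbonNilpart, smul_eq_mul, smul_eq_mul]
  ring

theorem map_mul_ribbon_pow (hℓ : ℓ ≠ 0) (h : CenterRelations ℓ e wp wm)
    (hlam : IsLeftIntegral ℓ e wp wm lam) {tau : A →ₗ[ℂ] ℂ} (htau : IsQuantumTrace ℓ e wp wm tau)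
    {x : A} (hx : x ∈ Submodule.span ℂ
        ({z : A | ∃ m ≤ ℓ, z = e m} ∪ {z : A | ∃ m, 1 ≤ m ∧ m ≤ ℓ - 1 ∧ z = wp m + wm m}))
    (n : ℕ) :
    lam (x * ribbon ℓ σ e wp wm ^ n) =
      n * integralTraceRatio ℓ σ * tau (x * ribbon ℓ σ e wp wm ^ n) := by
  let mulPow := LinearMap.mulRight ℂ (ribbon ℓ σ e wp wm ^ n)
  have hgen : Set.EqOn ⇑(lam ∘ₗ mulPow) ⇑(((n : ℂ) * integralTraceRatio ℓ σ) • (tau ∘ₗ mulPow))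
      ({z : A | ∃ m ≤ ℓ, z = e m} ∪ {z : A | ∃ m, 1 ≤ m ∧ m ≤ ℓ - 1 ∧ z = wp m + wm m}) := by
    rintro _ (⟨j, hj, rfl⟩ | ⟨j, hj₁, hj₂, rfl⟩)
    · exact map_mul_pow_eq_of_mul_eq_smul_add lam tau (h.e_mul_ribbon hj)
        (h.ribbonNilpart_mul_ribbon hj) (hlam.map_e j hj) (htau.map_ribbonNilpart j)
        (by rw [hlam.map_ribbonNilpart hℓ hj, htau.map_e j hj]) n
    · exact map_mul_pow_eq_of_mul_eq_smul_add lam tau (d := 0)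
        (by rw [add_zero, h.w_mul_ribbon hj₁ hj₂]) (by rw [zero_mul, smul_zero])
        (hlam.map_w hj₁ hj₂) (map_zero tau) (by rw [map_zero, htau.map_w hj₁ hj₂, mul_zero]) n
  simpa only [LinearMap.comp_apply, LinearMap.smul_apply, mulPow, LinearMap.mulRight_apply,
    smul_eq_mul, mul_assoc] using
    LinearMap.eqOn_span hgen hx

end IsLeftIntegral

end Ribbon

theorem integral_trace_relation_general (ℓ : ℕ) (hℓ : 1 < ℓ) (σ : ℤ)
    (A : Type*) [CommRing A] [Algebra ℂ A]
    (e wp wm : ℕ → A)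
    (hee : ∀ i ≤ ℓ, ∀ j ≤ ℓ, e i * e j = if i = j then e i else 0)
    (hewp : ∀ i ≤ ℓ, ∀ j, 1 ≤ j → j ≤ ℓ - 1 → e i * wp j = if i = j then wp j else 0)
    (hewm : ∀ i ≤ ℓ, ∀ j, 1 ≤ j → j ≤ ℓ - 1 → e i * wm j = if i = j then wm j else 0)
    (hww : ∀ i, 1 ≤ i → i ≤ ℓ - 1 → ∀ j, 1 ≤ j → j ≤ ℓ - 1 →
      wp i * wp j = 0 ∧ wp i * wm j = 0 ∧ wm i * wp j = 0 ∧ wm i * wm j = 0)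
    (lam tau : A →ₗ[ℂ] ℂ)
    (hlame : ∀ m ≤ ℓ, lam (e m) = 0)
    (hlamwp : ∀ m, 1 ≤ m → m ≤ ℓ - 1 →
      lam (wp m) =
        (-1 : ℂ) ^ (m - 1) * ((tval ℓ)⁻¹) ^ 2 * qint ℓ m ^ 3 /
          (2 * (ℓ : ℂ) * qfact ℓ (ℓ - 1) ^ 2))
    (hlamwm : ∀ m, 1 ≤ m → m ≤ ℓ - 1 → lam (wm m) = -lam (wp m))
    (htaue : ∀ m ≤ ℓ, tau (e m) = qint ℓ m ^ 2)
    (htauwp : ∀ m, 1 ≤ m → m ≤ ℓ - 1 → tau (wp m) = 0)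
    (htauwm : ∀ m, 1 ≤ m → m ≤ ℓ - 1 → tau (wm m) = 0) :
    ∀ x ∈ Submodule.span ℂ
        ({z : A | ∃ m ≤ ℓ, z = e m} ∪
          {z : A | ∃ m, 1 ≤ m ∧ m ≤ ℓ - 1 ∧ z = wp m + wm m}),
      ∀ n : ℕ,
        lam (x * ribbon ℓ σ e wp wm ^ n) * tau (ribbon ℓ σ e wp wm) =
          (n : ℂ) * tau (x * ribbon ℓ σ e wp wm ^ n) * lam (ribbon ℓ σ e wp wm) := by
  intro x hx n
  have hℓ₀ : ℓ ≠ 0 := by omega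
  have hA : CenterRelations ℓ e wp wm := ⟨hee, hewp, hewm, hww⟩
  have hlam : IsLeftIntegral ℓ e wp wm lam := ⟨hlame, hlamwp, hlamwm⟩
  have htau : IsQuantumTrace ℓ e wp wm tau := ⟨htaue, htauwp, htauwm⟩
  rw [hlam.map_mul_ribbon_pow hℓ₀ hA htau hx n, hlam.map_ribbon hℓ₀ htau]
  ring

/-- With `ρ` the ribbon element, `λ` the left integral and `τ` the
quantum trace, for every `x` in the span of the `eₘ` and the `wₘ = wₘ⁺ + wₘ⁻` and every
`n ≥ 0`:  `λ(xρⁿ)·τ(ρ) = n·τ(xρⁿ)·λ(ρ)`. -/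
theorem integral_trace_relation (ℓ : ℕ) (hℓ : 1 < ℓ) (σ : ℤ) (hσ : σ = 1 ∨ σ = -1)
    (A : Type*) [CommRing A] [Algebra ℂ A]
    (e wp wm : ℕ → A)
    (hee : ∀ i ≤ ℓ, ∀ j ≤ ℓ, e i * e j = if i = j then e i else 0)
    (hewp : ∀ i ≤ ℓ, ∀ j, 1 ≤ j → j ≤ ℓ - 1 → e i * wp j = if i = j then wp j else 0)
    (hewm : ∀ i ≤ ℓ, ∀ j, 1 ≤ j → j ≤ ℓ - 1 → e i * wm j = if i = j then wm j else 0)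
    (hww : ∀ i, 1 ≤ i → i ≤ ℓ - 1 → ∀ j, 1 ≤ j → j ≤ ℓ - 1 →
      wp i * wp j = 0 ∧ wp i * wm j = 0 ∧ wm i * wp j = 0 ∧ wm i * wm j = 0)
    (lam tau : A →ₗ[ℂ] ℂ)
    (hlame : ∀ m ≤ ℓ, lam (e m) = 0)
    (hlamwp : ∀ m, 1 ≤ m → m ≤ ℓ - 1 →
      lam (wp m) =
        (-1 : ℂ) ^ (m - 1) * ((tval ℓ)⁻¹) ^ 2 * qint ℓ m ^ 3 /
          (2 * (ℓ : ℂ) * qfact ℓ (ℓ - 1) ^ 2))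
    (hlamwm : ∀ m, 1 ≤ m → m ≤ ℓ - 1 → lam (wm m) = -lam (wp m))
    (htaue : ∀ m ≤ ℓ, tau (e m) = qint ℓ m ^ 2)
    (htauwp : ∀ m, 1 ≤ m → m ≤ ℓ - 1 → tau (wp m) = 0)
    (htauwm : ∀ m, 1 ≤ m → m ≤ ℓ - 1 → tau (wm m) = 0) :
    ∀ x ∈ Submodule.span ℂ
        ({z : A | ∃ m ≤ ℓ, z = e m} ∪
          {z : A | ∃ m, 1 ≤ m ∧ m ≤ ℓ - 1 ∧ z = wp m + wm m}),
      ∀ n : ℕ,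
        lam (x * ribbon ℓ σ e wp wm ^ n) * tau (ribbon ℓ σ e wp wm) =
          (n : ℂ) * tau (x * ribbon ℓ σ e wp wm ^ n) * lam (ribbon ℓ σ e wp wm) :=
  integral_trace_relation_general ℓ hℓ σ A e wp wm hee hewp hewm hww lam tau hlame hlamwp hlamwm
    htaue htauwp htauwm

end RestrictedQsl2
end
end
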